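/- If T is a Π^in_α-axiomatizable theory with α-back-and-forth structure presented by 𝔹, then every model C of the theory T_α is a model of T. -/

import Mathlib

attribute [local instance] Classical.propDecidable

noncomputable section

/-! ## Basic oracle computability on Cantor space -/

abbrev Cantor := ℕ → Bool

/-- Kleene-style partial recursion relative to an oracle `O`. -/
inductive RecursiveInOracle (O : ℕ →. ℕ) : (ℕ →. ℕ) → Prop
  | oracle : RecursiveInOracle O O
  | zero : RecursiveInOracle O (pure 0)
  | succ : RecursiveInOracle O Nat.succ
  | left : RecursiveInOracle O ↑fun n : ℕ => n.unpair.1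
  | right : RecursiveInOracle O ↑fun n : ℕ => n.unpair.2
  | pair {f g} : RecursiveInOracle O f → RecursiveInOracle O g →
      RecursiveInOracle O fun n => Nat.pair <$> f n <*> g n
  | comp {f g} : RecursiveInOracle O f → RecursiveInOracle O g →
      RecursiveInOracle O fun n => g n >>= f
  | prec {f g} : RecursiveInOracle O f → RecursiveInOracle O g →
      RecursiveInOracle O (Nat.unpaired fun a n =>
        n.rec (f a) fun y IH => do let i ← IH; g (Nat.pair a (Nat.pair y i)))
  | rfind {f} : RecursiveInOracle O f →
      RecursiveInOracle O fun a => Nat.rfind fun n => (fun m => m = 0) <$> f (Nat.pair a n)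

def asOracle (X : Cantor) : ℕ →. ℕ := fun n => Part.some (cond (X n) 1 0)

/-- `TRed X Y` : `X` is Turing reducible to `Y` (`X ≤_T Y`). -/
def TRed (X Y : Cantor) : Prop := RecursiveInOracle (asOracle Y) (asOracle X)

/-- Turing equivalence. -/
def TEquiv (X Y : Cantor) : Prop := TRed X Y ∧ TRed Y X

/-- Turing join `X ⊕ Y`. -/
def joinC (X Y : Cantor) : Cantor := fun n => if n % 2 = 0 then X (n / 2) else Y (n / 2)

def evens (Z : Cantor) : Cantor := fun n => Z (2 * n)
def odds (Z : Cantor) : Cantor := fun n => Z (2 * n + 1)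

/-- `X` is (outright) computable. -/
def ComputableC (X : Cantor) : Prop := TRed X fun _ => false

/-! ## Ordinals computable in an oracle; `ω₁^X` -/

/-- The strict order relation on the field coded by `r` (as a set of codes of pairs). -/
def relOf (r : Cantor) :
    {n : ℕ // r (Nat.pair n n) = true} → {n : ℕ // r (Nat.pair n n) = true} → Prop :=
  fun a b => r (Nat.pair a.1 b.1) = true ∧ a.1 ≠ b.1

/-- `r` codes a well-ordering of order type `α`. -/
def CodesOrdinal (r : Cantor) (α : Ordinal) : Prop :=
  ∃ h : IsWellOrder _ (relOf r), @Ordinal.type _ (relOf r) h = α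

/-- `ω₁^X`: the least ordinal with no `X`-computable copy. -/
def omega1C (X : Cantor) : Ordinal :=
  sInf {α : Ordinal | ¬ ∃ r : Cantor, TRed r X ∧ CodesOrdinal r α}

/-- `α` is admissible: of the form `ω₁^X`. -/
def AdmissibleOrd (α : Ordinal) : Prop := ∃ X : Cantor, omega1C X = α

/-! ## Projective sets and projective determinacy -/

/-- Projective subsets of Cantor space. -/
inductive ProjectiveSet : Set Cantor → Prop
  | borel {s : Set Cantor} : MeasurableSet s → ProjectiveSet s
  | compl {s} : ProjectiveSet s → ProjectiveSet sᶜ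
  | proj {s} : ProjectiveSet s → ProjectiveSet {X | ∃ Y : Cantor, joinC X Y ∈ s}

/-- A function `2^ω → 2^ω` is projective if its graph is. -/
def ProjFun (g : Cantor → Cantor) : Prop := ProjectiveSet {Z | odds Z = g (evens Z)}

/-- History of a play of the Gale–Stewart game where I follows `σ`, II follows `τ`. -/
def histAux (σ τ : List Bool → Bool) : ℕ → List Bool
  | 0 => []
  | n + 1 => histAux σ τ n ++ [if n % 2 = 0 then σ (histAux σ τ n) else τ (histAux σ τ n)]

/-- The infinite play produced by strategies `σ` (player I) and `τ` (player II). -/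
def play (σ τ : List Bool → Bool) : Cantor :=
  fun n => if n % 2 = 0 then σ (histAux σ τ n) else τ (histAux σ τ n)

/-- The game with payoff `A` is determined. -/
def DeterminedG (A : Set Cantor) : Prop :=
  (∃ σ, ∀ τ, play σ τ ∈ A) ∨ (∃ τ, ∀ σ, play σ τ ∉ A)

/-- Projective determinacy. -/
def PD : Prop := ∀ A : Set Cantor, ProjectiveSet A → DeterminedG A

/-! ## Trees on `2^{<ω}` -/

def seg (Y : Cantor) (n : ℕ) : List Bool := (List.range n).map Y

def IsTree (P : List Bool → Bool) : Prop :=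
  P [] = true ∧ ∀ σ b, P (σ ++ [b]) = true → P σ = true

def IsPathT (P : List Bool → Bool) (Y : Cantor) : Prop := ∀ n, P (seg Y n) = true

def IsSplit (P : List Bool → Bool) (σ : List Bool) : Prop :=
  P (σ ++ [false]) = true ∧ P (σ ++ [true]) = true

def PerfectT (P : List Bool → Bool) : Prop :=
  ∀ σ, P σ = true → ∃ τ, σ <+: τ ∧ IsSplit P τ

def PrunedT (P : List Bool → Bool) : Prop :=
  ∀ σ, P σ = true → P (σ ++ [false]) = true ∨ P (σ ++ [true]) = true

/-- The tree as an element of Cantor space (via coding of finite strings). -/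
def treeSet (P : List Bool → Bool) : Cantor := fun n =>
  match (Encodable.decode n : Option (List Bool)) with
  | some σ => P σ
  | none => false

/-- A perfect (pruned) tree all of whose paths compute it. -/
def PointedT (P : List Bool → Bool) : Prop :=
  IsTree P ∧ PrunedT P ∧ PerfectT P ∧ ∀ Y, IsPathT P Y → TRed (treeSet P) Y

/-- Number of splitting levels of `P` along `Y` below `k`. -/
def splitsBelow (P : List Bool → Bool) (Y : Cantor) (k : ℕ) : ℕ :=
  ((List.range k).filter fun j => decide (IsSplit P (seg Y j))).length

/-- `Y` is the path of `P` obtained by following `X` at every split of `P`. -/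
def FollowsT (P : List Bool → Bool) (X Y : Cantor) : Prop :=
  IsPathT P Y ∧ (∀ n, ∃ k, n ≤ k ∧ IsSplit P (seg Y k)) ∧
    ∀ k, IsSplit P (seg Y k) → Y k = X (splitsBelow P Y k)

/-! ## Countable structures and infinitary logic -/

/-- A structure on domain `ℕ` in the relational language whose `i`-th symbol has arity `ar i`. -/
def Str (ar : ℕ → ℕ) := (i : ℕ) → (Fin (ar i) → ℕ) → Prop

/-- `L_{ω₁,ω}` formulas (variables indexed by `ℕ`, countable conjunctions). -/
inductive IForm (ar : ℕ → ℕ) : Type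
  | atom (i : ℕ) (v : Fin (ar i) → ℕ)
  | eq (x y : ℕ)
  | not (φ : IForm ar)
  | conj (φs : ℕ → IForm ar)
  | all (x : ℕ) (φ : IForm ar)

variable {ar : ℕ → ℕ}

def Sat (A : Str ar) : (ℕ → ℕ) → IForm ar → Prop
  | s, .atom i v => A i fun j => s (v j)
  | s, .eq x y => s x = s y
  | s, .not φ => ¬ Sat A s φ
  | s, .conj φs => ∀ n, Sat A s (φs n)
  | s, .all x φ => ∀ a : ℕ, Sat A (Function.update s x a) φ

def freeVars : IForm ar → Set ℕ
  | .atom _ v => Set.range v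
  | .eq x y => {x, y}
  | .not φ => freeVars φ
  | .conj φs => ⋃ n, freeVars (φs n)
  | .all x φ => freeVars φ \ {x}

/-- A sentence: no free variables. -/
def SentenceF (φ : IForm ar) : Prop := freeVars φ = ∅

/-- Satisfaction of a sentence. -/
def SatS (A : Str ar) (φ : IForm ar) : Prop := Sat A (fun _ => 0) φ

def IForm.disj (φs : ℕ → IForm ar) : IForm ar := .not (.conj fun n => .not (φs n))
def IForm.ex (x : ℕ) (φ : IForm ar) : IForm ar := .not (.all x (.not φ))
def IForm.exs (l : List ℕ) (φ : IForm ar) : IForm ar := l.foldr IForm.ex φ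
def IForm.alls (l : List ℕ) (φ : IForm ar) : IForm ar := l.foldr IForm.all φ
def IForm.and (φ ψ : IForm ar) : IForm ar := .conj fun n => if n = 0 then φ else ψ

/-- Finitary quantifier-free formulas. -/
inductive QFree : IForm ar → Prop
  | atom {i v} : QFree (.atom i v)
  | eq {x y} : QFree (.eq x y)
  | not {φ} : QFree φ → QFree (.not φ)
  | and {φ ψ} : QFree φ → QFree ψ → QFree (φ.and ψ)

mutual
/-- `Σ^in_α` formulas. -/
inductive IsSig : Ordinal.{0} → IForm ar → Prop
  | qf {α : Ordinal} {φ : IForm ar} : QFree φ → IsSig α φ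
  | comp {α : Ordinal} (β : ℕ → Ordinal) (vs : ℕ → List ℕ) (φs : ℕ → IForm ar) :
      (∀ n, β n < α) → (∀ n, IsPi (β n) (φs n)) →
      IsSig α (IForm.disj fun n => IForm.exs (vs n) (φs n))
/-- `Π^in_α` formulas. -/
inductive IsPi : Ordinal.{0} → IForm ar → Prop
  | qf {α : Ordinal} {φ : IForm ar} : QFree φ → IsPi α φ
  | comp {α : Ordinal} (β : ℕ → Ordinal) (vs : ℕ → List ℕ) (φs : ℕ → IForm ar) :
      (∀ n, β n < α) → (∀ n, IsSig (β n) (φs n)) →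
      IsPi α (.conj fun n => IForm.alls (vs n) (φs n))
end

/-- `Σ^in_α`-elementary equivalence (`A ≡_α B`). -/
def SigEquiv (α : Ordinal) (A B : Str ar) : Prop :=
  ∀ φ : IForm ar, IsSig α φ → SentenceF φ → (SatS A φ ↔ SatS B φ)

/-- The assignment sending variable `i` to the `i`-th entry of the tuple `a`. -/
def asn (a : List ℕ) : ℕ → ℕ := fun i => a.getD i 0

/-- Every `Π^in_α` formula (with free variables among the tuple) true of `ā` in `A`
is true of `b̄` in `B`. -/
def PiTypeSub (α : Ordinal) (A : Str ar) (a : List ℕ) (B : Str ar) (b : List ℕ) : Prop :=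
  ∀ φ : IForm ar, IsPi α φ → freeVars φ ⊆ Set.Iio a.length →
    Sat A (asn a) φ → Sat B (asn b) φ

/-! ## Back-and-forth relations -/

/-- `ā` and `b̄` satisfy the same atomic formulas among the first `|ā|` symbols. -/
def atomEquiv (A : Str ar) (a : List ℕ) (B : Str ar) (b : List ℕ) : Prop :=
  a.length = b.length ∧
  (∀ p q, p < a.length → q < a.length →
    (a.getD p 0 = a.getD q 0 ↔ b.getD p 0 = b.getD q 0)) ∧
  (∀ i, i < a.length → ∀ v : Fin (ar i) → ℕ, (∀ j, v j < a.length) →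
    (A i (fun j => a.getD (v j) 0) ↔ B i fun j => b.getD (v j) 0))

/-- The `α`-back-and-forth relations `(A,ā) ≤_α (B,b̄)`. -/
def BFLe (α : Ordinal.{0}) (A : Str ar) (a : List ℕ) (B : Str ar) (b : List ℕ) : Prop :=
  if α = 0 then atomEquiv A a B b
  else ∀ (d : List ℕ) (γ : Ordinal.{0}) (hγ : γ < α),
    ∃ c : List ℕ, c.length = d.length ∧ BFLe γ B (b ++ d) A (a ++ c)
termination_by α
decreasing_by exact hγ

/-- `(A,ā) ≡_α (B,b̄)`. -/
def BFEq (α : Ordinal) (A : Str ar) (a : List ℕ) (B : Str ar) (b : List ℕ) : Prop :=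
  BFLe α A a B b ∧ BFLe α B b A a

/-- `(C,c̄)` belongs to `ext_β(A,ā)`: it is `≤_β` some `(A, ād̄)`. -/
def ExtMem (β : Ordinal) (C : Str ar) (c : List ℕ) (A : Str ar) (a : List ℕ) : Prop :=
  ∃ d : List ℕ, c.length = a.length + d.length ∧ BFLe β C c A (a ++ d)

/-- Re-arrangement `π_ι` of a tuple. -/
def projT (ι : List ℕ) (a : List ℕ) : List ℕ := ι.map fun j => a.getD j 0

/-! ## Isomorphism, diagrams, copies, spectra, Scott rank -/

def IsoStr (A B : Str ar) : Prop :=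
  ∃ e : ℕ ≃ ℕ, ∀ i v, A i v ↔ B i fun j => e (v j)

/-- `D` is (the characteristic function of) the atomic diagram of `B`. -/
def DiagOf (B : Str ar) (D : Cantor) : Prop :=
  ∀ i (v : Fin (ar i) → ℕ),
    (B i v ↔ D (Nat.pair i (Encodable.encode (List.ofFn v))) = true)

/-- `X` computes a copy of `A`. -/
def ComputesCopy (X : Cantor) (A : Str ar) : Prop :=
  ∃ B D, IsoStr A B ∧ DiagOf B D ∧ TRed D X

/-- `ω₁^A = min{ω₁^X : X computes a copy of A}`. -/
def omega1Str (A : Str ar) : Ordinal :=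
  sInf {β : Ordinal | ∃ X, ComputesCopy X A ∧ omega1C X = β}

/-- `ω₁^{A,Y} = min{ω₁^X : X ≥_T Y, X computes a copy of A}`. -/
def omega1StrRel (A : Str ar) (Y : Cantor) : Ordinal :=
  sInf {β : Ordinal | ∃ X, TRed Y X ∧ ComputesCopy X A ∧ omega1C X = β}

/-- The two tuples satisfy the same `L_{ω₁,ω}` formulas in `A`. -/
def AllTypeEq (A : Str ar) (a b : List ℕ) : Prop :=
  ∀ φ : IForm ar, freeVars φ ⊆ Set.Iio a.length → (Sat A (asn a) φ ↔ Sat A (asn b) φ)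

/-- `ρ_A(ā)`: least `α` such that the `Π^in_α` type of `ā` determines its full type. -/
def rhoSR (A : Str ar) (a : List ℕ) : Ordinal :=
  sInf {α : Ordinal | ∀ b : List ℕ, b.length = a.length →
    PiTypeSub α A a A b → AllTypeEq A a b}

/-- Scott rank. -/
def SR (A : Str ar) : Ordinal := ⨆ a : List ℕ, rhoSR A a + 1

/-! ## Counting models -/

def CountablyManyModels (T : IForm ar) : Prop :=
  ∃ S : Set (Str ar), S.Countable ∧ ∀ A, SatS A T → ∃ B ∈ S, IsoStr A B

/-- `T` is scattered: countably many `≡_α`-classes of models for each `α < ω₁`. -/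
def ScatteredT (T : IForm ar) : Prop :=
  ∀ α : Ordinal, α < (Cardinal.aleph 1).ord →
    ∃ S : Set (Str ar), S.Countable ∧ ∀ A, SatS A T → ∃ B ∈ S, SatS B T ∧ SigEquiv α A B

/-- Counterexample to Vaught's conjecture. -/
def CexVC (T : IForm ar) : Prop := ScatteredT T ∧ ¬ CountablyManyModels T

/-- `T` has exactly `ℵ₁` many models up to isomorphism. -/
def Aleph1ManyModels (T : IForm ar) : Prop :=
  Cardinal.mk (Quot fun A B : {M : Str ar // SatS M T} => IsoStr A.1 B.1) = Cardinal.aleph 1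

/-- Minimal counterexample to Vaught's conjecture. -/
def MinimalCex (T : IForm ar) : Prop :=
  Aleph1ManyModels T ∧ ScatteredT T ∧
    ∀ φ : IForm ar, SentenceF φ →
      CountablyManyModels (T.and φ) ∨ CountablyManyModels (T.and φ.not)

/-! ## Computable infinitary formulas -/

/-- `FCodes ar c φ`: `c` is a code of the computable infinitary formula `φ`. -/
inductive FCodes (ar : ℕ → ℕ) : ℕ → IForm ar → Prop
  | atom (i : ℕ) (v : Fin (ar i) → ℕ) :
      FCodes ar (Nat.pair 0 (Nat.pair i (Encodable.encode (List.ofFn fun j => v j)))) (.atom i v)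
  | eq (x y : ℕ) : FCodes ar (Nat.pair 1 (Nat.pair x y)) (.eq x y)
  | not {c φ} : FCodes ar c φ → FCodes ar (Nat.pair 2 c) (.not φ)
  | all {c φ} (x : ℕ) : FCodes ar c φ → FCodes ar (Nat.pair 3 (Nat.pair x c)) (.all x φ)
  | conj (c : Nat.Partrec.Code) (g : ℕ → ℕ) (φs : ℕ → IForm ar) :
      (∀ n, g n ∈ c.eval n) → (∀ n, FCodes ar (g n) (φs n)) →
      FCodes ar (Nat.pair 4 (Encodable.encode c)) (.conj φs)

/-- A computable infinitary (`L^c_{ω₁,ω}`) formula. -/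
def ComputableForm (φ : IForm ar) : Prop := ∃ c, FCodes ar c φ

/-! ## Finite diagrams -/

/-- `m` codes an atomic fact (among the first `|ā|` symbols) true of `ā` in `A`. -/
def FinDiagMem (A : Str ar) (a : List ℕ) (m : ℕ) : Prop :=
  ∃ (i : ℕ) (l : List ℕ), m = Nat.pair i (Encodable.encode l) ∧ i < a.length ∧
    l.length = ar i ∧ (∀ j ∈ l, j < a.length) ∧ A i fun j => a.getD (l.getD (j : ℕ) 0) 0

def tuplesBelow (k : ℕ) : ℕ → List (List ℕ)
  | 0 => [[]]
  | n + 1 => (List.range k).flatMap fun x => (tuplesBelow k n).map fun l => x :: l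

def atomCodes (ar : ℕ → ℕ) (k : ℕ) : List ℕ :=
  (List.range k).flatMap fun i => (tuplesBelow k (ar i)).map fun l => Nat.pair i (Encodable.encode l)

/-- A number coding the atomic diagram `D_A(ā)` of the tuple `ā` in `A`
(over the first `|ā|` symbols of the language). -/
def diagCode (A : Str ar) (a : List ℕ) : ℕ :=
  Nat.pair a.length <| Encodable.encode <|
    (atomCodes ar a.length).filter fun m => decide (FinDiagMem A a m)

/-- A computably enumerable set of naturals. -/
def CEset (S : Set ℕ) : Prop := ∃ c : Nat.Partrec.Code, ∀ n, n ∈ S ↔ (c.eval n).Dom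

/-! ## Hyperarithmetic reducibility (via the Δ¹₁ = HYP characterization) -/

def Pi11In (X : Cantor) (S : Set ℕ) : Prop :=
  ∃ R : Cantor, TRed R X ∧ ∀ n, n ∈ S ↔
    ∀ f : ℕ → ℕ, ∃ k, R (Nat.pair n (Encodable.encode ((List.range k).map f))) = true

/-- `Y` is hyperarithmetic in `X` (i.e. `Δ¹₁(X)`). -/
def HypIn (Y X : Cantor) : Prop :=
  Pi11In X {n | Y n = true} ∧ Pi11In X {n | Y n = false}

/-- `A` has an `X`-hyperarithmetic copy. -/
def HypCopy (X : Cantor) (A : Str ar) : Prop :=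
  ∃ B D, IsoStr A B ∧ DiagOf B D ∧ HypIn D X

/-! ## The theory `T_α` of the `α`-back-and-forth structure, semantically -/

/-- A structure in the extended language `L_α`: a base `L`-structure together with
interpretations of the relations `φ_σ`, where the `β`-bf-type `σ` is represented by a
pair `(C, c̄)` (a model of `T` with a distinguished tuple). -/
structure ExtModel (ar : ℕ → ℕ) where
  base : Str ar
  Phi : Ordinal.{0} → Str ar → List ℕ → List ℕ → Prop

/-- Interpretation of `ψ_σ(b̄) := ⋁_{σ' ∈ bf_α, (σ')_β = σ} φ_{σ'}(b̄)`,
with `σ` represented by `(C, c̄)`. -/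
def PsiH (T : IForm ar) (α : Ordinal.{0}) (M : ExtModel ar) (β : Ordinal.{0})
    (C : Str ar) (c b : List ℕ) : Prop :=
  ∃ (C' : Str ar) (c' : List ℕ), SatS C' T ∧ c'.length = b.length ∧
    BFEq β C' c' C c ∧ M.Phi α C' c' b

/-- `M` is a model of the theory `T_α` axiomatizing the `α`-bf-structure of `T`:
(invariance of the symbols `φ_σ` in the representative of `σ`), (T1) every tuple realizes
exactly one `β`-bf-type, (T2) the recursive definition of `φ_σ`, and (T3) the
implications of `ψ_σ`. -/
def ModelsTAlpha (T : IForm ar) (α : Ordinal.{0}) (M : ExtModel ar) : Prop :=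
  (∀ β ≤ α, ∀ (C : Str ar) (c : List ℕ) (C' : Str ar) (c' : List ℕ) (b : List ℕ),
      SatS C T → SatS C' T → BFEq β C c C' c' → (M.Phi β C c b ↔ M.Phi β C' c' b)) ∧
  (∀ b : List ℕ, ∃ (C : Str ar) (c : List ℕ), SatS C T ∧ c.length = b.length ∧
      M.Phi α C c b) ∧
  (∀ β < α, ∀ (b : List ℕ) (C : Str ar) (c : List ℕ) (C' : Str ar) (c' : List ℕ),
      SatS C T → SatS C' T → PsiH T α M β C c b → PsiH T α M β C' c' b →
      BFEq β C c C' c') ∧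
  (∀ β ≤ α, ∀ (C : Str ar) (c : List ℕ), SatS C T → ∀ b : List ℕ,
      (M.Phi β C c b ↔ b.length = c.length ∧
        (β = 0 → atomEquiv C c M.base b) ∧
        (∀ γ < β, ∀ (D : Str ar) (d : List ℕ), SatS D T → ¬ ExtMem γ D d C c →
          ∀ y : List ℕ, d.length = b.length + y.length → ¬ M.Phi γ D d (b ++ y)))) ∧
  (∀ β < α, ∀ (C : Str ar) (c b : List ℕ), SatS C T → PsiH T α M β C c b →
      M.Phi β C c b ∧ ∀ γ < β, ∀ (D : Str ar) (d : List ℕ), SatS D T →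
        ExtMem γ D d C c →
        ∃ y : List ℕ, d.length = b.length + y.length ∧ M.Phi γ D d (b ++ y))

/-! ## Presentations of the `α`-back-and-forth structure -/

/-- A presentation `𝔹` of the `α`-bf-structure of `T`: an enumeration of the bf-types
of levels `≤ α` (given by levels and representatives), together with an oracle `B`
coding the relations `≤_β`, the projections `(·)_β` and `π_ι`, the extension relations
`ext`, and the atomic diagrams of the `0`-bf-types. -/
structure BFPres (ar : ℕ → ℕ) (T : IForm ar) (α : Ordinal.{0}) where
  B : Cantor
  lvl : ℕ → Ordinal.{0}
  repS : ℕ → Str ar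
  repT : ℕ → List ℕ
  lvl_le : ∀ n, lvl n ≤ α
  rep_models : ∀ n, SatS (repS n) T
  surj : ∀ β ≤ α, ∀ (A : Str ar) (a : List ℕ), SatS A T →
    ∃ n, lvl n = β ∧ (repT n).length = a.length ∧ BFEq β (repS n) (repT n) A a
  le_code : ∀ m n, (B (Nat.pair 0 (Nat.pair m n)) = true ↔
    lvl m = lvl n ∧ BFLe (lvl m) (repS m) (repT m) (repS n) (repT n))
  proj_code : ∀ m n, (B (Nat.pair 1 (Nat.pair m n)) = true ↔
    lvl m ≤ lvl n ∧ BFEq (lvl m) (repS m) (repT m) (repS n) (repT n))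
  ext_code : ∀ m n, (B (Nat.pair 2 (Nat.pair m n)) = true ↔
    lvl m < lvl n ∧ ExtMem (lvl m) (repS m) (repT m) (repS n) (repT n))
  pi_code : ∀ m n (ι : List ℕ),
    (B (Nat.pair 3 (Nat.pair m (Nat.pair n (Encodable.encode ι)))) = true ↔
      lvl m = lvl n ∧ (∀ j ∈ ι, j < (repT n).length) ∧
      BFEq (lvl m) (repS m) (repT m) (repS n) (projT ι (repT n)))
  diag_code : ∀ m k, (B (Nat.pair 4 (Nat.pair m k)) = true ↔
    lvl m = 0 ∧ FinDiagMem (repS m) (repT m) k)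

end


/-!
Karp's transfer theorem: `Π^in_β` formulas are preserved upward along `≤_β` and `Σ^in_β`
formulas downward, each quantifier block being matched by one back-and-forth step.

In a model `M` of `T_α`, if `φ_σ(b̄)` holds with `σ` represented by `(C, c̄)`, then
`(C, c̄) ≤_β (M, b̄)`; if moreover `σ` has level `α`, then `(M, b̄) ≤_β (C, c̄)` for all `β < α`.
Both claims are proved together by induction on `β`: (T2) keeps every extension of `b̄` inside
`ext_β(σ)`, and (T3) realizes every member of `ext_β(σ)` by an extension of `b̄`.

By (T1) some tuple of `M` satisfies `φ_σ` for a type `σ` of level `α`, represented by a model `C`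
of `T`. Then `C ≤_α M`, and the `Π^in_α` sentence `T` passes from `C` to `M`.
-/

section

variable {ar : ℕ → ℕ}

lemma atomEquiv_refl (A : Str ar) (a : List ℕ) : atomEquiv A a A a :=
  ⟨rfl, fun _ _ _ _ => Iff.rfl, fun _ _ _ _ => Iff.rfl⟩

lemma atomEquiv.symm {A B : Str ar} {a b : List ℕ} (h : atomEquiv A a B b) :
    atomEquiv B b A a := by
  obtain ⟨hl, hEq, hRel⟩ := h
  exact ⟨hl.symm, fun p q hp hq => (hEq p q (by omega) (by omega)).symm,
    fun i hi v hv => (hRel i (by omega) v fun j => by have := hv j; omega).symm⟩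

lemma atomEquiv.trans {A B C : Str ar} {a b c : List ℕ} (h₁ : atomEquiv A a B b)
    (h₂ : atomEquiv B b C c) : atomEquiv A a C c := by
  obtain ⟨hl₁, hEq₁, hRel₁⟩ := h₁
  obtain ⟨hl₂, hEq₂, hRel₂⟩ := h₂
  exact ⟨hl₁.trans hl₂, fun p q hp hq => (hEq₁ p q hp hq).trans (hEq₂ p q (by omega) (by omega)),
    fun i hi v hv => (hRel₁ i hi v hv).trans (hRel₂ i (by omega) v fun j => by have := hv j; omega)⟩

lemma bfLe_zero_iff {A B : Str ar} {a b : List ℕ} : BFLe 0 A a B b ↔ atomEquiv A a B b := by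
  rw [BFLe]; simp

lemma bfLe_iff_of_ne_zero {β : Ordinal} (hβ : β ≠ 0) {A B : Str ar} {a b : List ℕ} :
    BFLe β A a B b ↔ ∀ (d : List ℕ) (γ : Ordinal), γ < β →
      ∃ c : List ℕ, c.length = d.length ∧ BFLe γ B (b ++ d) A (a ++ c) := by
  rw [BFLe]; simp [hβ]

lemma bfLe_refl (β : Ordinal) (A : Str ar) (a : List ℕ) : BFLe β A a A a := by
  induction β using WellFoundedLT.induction generalizing a with
  | _ β IH =>
    rcases eq_or_ne β 0 with rfl | hβ
    · exact bfLe_zero_iff.2 (atomEquiv_refl A a)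
    · exact (bfLe_iff_of_ne_zero hβ).2 fun d γ hγ => ⟨d, rfl, IH γ hγ _⟩

lemma bfEq_refl (β : Ordinal) (A : Str ar) (a : List ℕ) : BFEq β A a A a :=
  ⟨bfLe_refl β A a, bfLe_refl β A a⟩

lemma BFLe.trans {β : Ordinal} {A B C : Str ar} {a b c : List ℕ} (h₁ : BFLe β A a B b)
    (h₂ : BFLe β B b C c) : BFLe β A a C c := by
  induction β using WellFoundedLT.induction generalizing A B C a b c with
  | _ β IH =>
    rcases eq_or_ne β 0 with rfl | hβ
    · exact bfLe_zero_iff.2 ((bfLe_zero_iff.1 h₁).trans (bfLe_zero_iff.1 h₂))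
    · rw [bfLe_iff_of_ne_zero hβ] at h₁ h₂ ⊢
      intro d γ hγ
      obtain ⟨e, he, hbe⟩ := h₂ d γ hγ
      obtain ⟨f, hf, haf⟩ := h₁ e γ hγ
      exact ⟨f, hf.trans he, IH γ hγ hbe haf⟩

lemma BFLe.length_eq {β : Ordinal} {A B : Str ar} {a b : List ℕ} (h : BFLe β A a B b) :
    a.length = b.length := by
  rcases eq_or_ne β 0 with rfl | hβ
  · exact (bfLe_zero_iff.1 h).1
  · obtain ⟨c, hc, h₀⟩ := (bfLe_iff_of_ne_zero hβ).1 h [] 0 (pos_iff_ne_zero.2 hβ)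
    have := (bfLe_zero_iff.1 h₀).1
    simp only [List.length_append, List.length_nil] at this hc
    omega

def updateList : (ℕ → ℕ) → List ℕ → List ℕ → ℕ → ℕ
  | s, x :: l, v :: w => updateList (Function.update s x v) l w
  | s, _, _ => s

lemma updateList_of_not_mem {z : ℕ} {l : List ℕ} (hz : z ∉ l) (s : ℕ → ℕ) (w : List ℕ) :
    updateList s l w z = s z := by
  induction l generalizing s w with
  | nil => rfl
  | cons x l ih =>
    rw [List.mem_cons, not_or] at hz
    rcases w with _ | ⟨v, w⟩
    · rfl
    · exact (ih hz.2 _ w).trans (Function.update_of_ne hz.1 _ _)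

lemma exists_updateList_eq_getD {z : ℕ} {l : List ℕ} (hz : z ∈ l) :
    ∃ k < l.length, ∀ (s : ℕ → ℕ) (w : List ℕ), l.length ≤ w.length →
      updateList s l w z = w.getD k 0 := by
  induction l with
  | nil => cases hz
  | cons x l ih =>
    by_cases hzl : z ∈ l
    · obtain ⟨k, hk, hw⟩ := ih hzl
      refine ⟨k + 1, by simpa using hk, fun s w hlen => ?_⟩
      rcases w with _ | ⟨v, w⟩
      · simp at hlen
      · exact hw _ w (by simpa using hlen)
    · obtain rfl : z = x := (List.mem_cons.1 hz).resolve_right hzl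
      refine ⟨0, by simp, fun s w hlen => ?_⟩
      rcases w with _ | ⟨v, w⟩
      · simp at hlen
      · exact (updateList_of_not_mem hzl _ w).trans (Function.update_self _ _ _)

lemma updateList_append_of_le {l w : List ℕ} (h : l.length ≤ w.length) (s : ℕ → ℕ)
    (v : List ℕ) : updateList s l (w ++ v) = updateList s l w := by
  induction l generalizing s w with
  | nil => rfl
  | cons x l ih =>
    rcases w with _ | ⟨u, w⟩
    · simp at h
    · exact ih (by simpa using h) _

lemma sat_and {A : Str ar} {s : ℕ → ℕ} {φ ψ : IForm ar} :
    Sat A s (φ.and ψ) ↔ Sat A s φ ∧ Sat A s ψ := by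
  refine ⟨fun h => ⟨by simpa using h 0, by simpa using h 1⟩, fun ⟨h₁, h₂⟩ n => ?_⟩
  by_cases hn : n = 0 <;> simp [hn, h₁, h₂]

lemma sat_disj {A : Str ar} {s : ℕ → ℕ} {φs : ℕ → IForm ar} :
    Sat A s (IForm.disj φs) ↔ ∃ n, Sat A s (φs n) := by
  simp [IForm.disj, Sat]

lemma sat_alls {A : Str ar} {φ : IForm ar} (l : List ℕ) (s : ℕ → ℕ) :
    Sat A s (IForm.alls l φ) ↔
      ∀ w : List ℕ, l.length ≤ w.length → Sat A (updateList s l w) φ := by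
  induction l generalizing s with
  | nil => exact ⟨fun h _ _ => h, fun h => h [] le_rfl⟩
  | cons x l ih =>
    refine ⟨fun h w hw => ?_, fun h v => (ih _).2 fun w hw => h (v :: w) (by simpa using hw)⟩
    rcases w with _ | ⟨v, w⟩
    · simp at hw
    · exact (ih _).1 (h v) w (by simpa using hw)

lemma sat_exs {A : Str ar} {φ : IForm ar} (l : List ℕ) (s : ℕ → ℕ) :
    Sat A s (IForm.exs l φ) ↔
      ∃ w : List ℕ, l.length ≤ w.length ∧ Sat A (updateList s l w) φ := by
  induction l generalizing s with
  | nil => exact ⟨fun h => ⟨[], le_rfl, h⟩, fun ⟨_, _, h⟩ => h⟩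
  | cons x l ih =>
    show Sat A s (IForm.ex x (IForm.exs l φ)) ↔ _
    simp only [IForm.ex, Sat, not_forall, not_not, ih]
    constructor
    · rintro ⟨v, w, hw, h⟩
      exact ⟨v :: w, by simpa using hw, h⟩
    · rintro ⟨_ | ⟨v, w⟩, hw, h⟩
      · simp at hw
      · exact ⟨v, w, by simpa using hw, h⟩

lemma freeVars_alls (l : List ℕ) (φ : IForm ar) :
    freeVars (IForm.alls l φ) = freeVars φ \ {z | z ∈ l} := by
  induction l with
  | nil => simp [IForm.alls]
  | cons x l ih =>
    show freeVars (IForm.alls l φ) \ {x} = _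
    rw [ih]; ext z
    simp only [Set.mem_sdiff, Set.mem_ofPred_eq, Set.mem_singleton_iff, List.mem_cons]
    tauto

lemma freeVars_exs (l : List ℕ) (φ : IForm ar) :
    freeVars (IForm.exs l φ) = freeVars φ \ {z | z ∈ l} := by
  induction l with
  | nil => simp [IForm.exs]
  | cons x l ih =>
    show freeVars (IForm.exs l φ) \ {x} = _
    rw [ih]; ext z
    simp only [Set.mem_sdiff, Set.mem_ofPred_eq, Set.mem_singleton_iff, List.mem_cons]
    tauto

inductive SymbolIn (i : ℕ) : IForm ar → Prop
  | atom (v : Fin (ar i) → ℕ) : SymbolIn i (.atom i v)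
  | not {φ : IForm ar} : SymbolIn i φ → SymbolIn i (.not φ)
  | all {x : ℕ} {φ : IForm ar} : SymbolIn i φ → SymbolIn i (.all x φ)
  | conj {φs : ℕ → IForm ar} (n : ℕ) : SymbolIn i (φs n) → SymbolIn i (.conj φs)

def SymbolsBelow (φ : IForm ar) (n : ℕ) : Prop := ∀ i, SymbolIn i φ → i < n

lemma SymbolsBelow.mono {φ : IForm ar} {m n : ℕ} (h : SymbolsBelow φ m) (hmn : m ≤ n) :
    SymbolsBelow φ n :=
  fun i hi => (h i hi).trans_le hmn

lemma QFree.exists_symbolsBelow {φ : IForm ar} (hq : QFree φ) : ∃ n, SymbolsBelow φ n := by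
  induction hq with
  | @atom i v => exact ⟨i + 1, fun j hj => by cases hj; omega⟩
  | eq => exact ⟨0, fun j hj => by cases hj⟩
  | not _ ih =>
    obtain ⟨n, hn⟩ := ih
    exact ⟨n, fun j hj => by cases hj with | not h => exact hn j h⟩
  | and _ _ ih₁ ih₂ =>
    obtain ⟨n₁, hn₁⟩ := ih₁
    obtain ⟨n₂, hn₂⟩ := ih₂
    refine ⟨max n₁ n₂, fun j hj => ?_⟩
    obtain ⟨k, hj⟩ : ∃ k, SymbolIn j (if k = 0 then _ else _) := by
      cases hj with | conj k h => exact ⟨k, h⟩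
    by_cases hk : k = 0
    · simp only [hk, if_true] at hj
      exact (hn₁ j hj).trans_le (le_max_left _ _)
    · simp only [hk, if_false] at hj
      exact (hn₂ j hj).trans_le (le_max_right _ _)

lemma IsPi.qFree_of_zero {φ : IForm ar} (h : IsPi 0 φ) : QFree φ := by
  cases h with
  | qf h => exact h
  | comp β _ _ hβ _ => exact absurd (hβ 0) not_lt_zero

lemma IsSig.qFree_of_zero {φ : IForm ar} (h : IsSig 0 φ) : QFree φ := by
  cases h with
  | qf h => exact h
  | comp β _ _ hβ _ => exact absurd (hβ 0) not_lt_zero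

/-- At level `0` the back-and-forth relations only see the symbols below the length of the
tuples, so tuples get padded to cover the symbols of a quantifier-free formula. -/
lemma exists_symbolsBelow_of_eq_zero {β : Ordinal} {φ : IForm ar} (h : β = 0 → QFree φ) :
    ∃ n, β = 0 → SymbolsBelow φ n := by
  by_cases hβ : β = 0
  · obtain ⟨n, hn⟩ := (h hβ).exists_symbolsBelow
    exact ⟨n, fun _ => hn⟩
  · exact ⟨0, fun h => absurd h hβ⟩

def AsnMatch (S : Set ℕ) (a b : List ℕ) (s t : ℕ → ℕ) : Prop :=
  ∀ z ∈ S, ∃ p < a.length, s z = a.getD p 0 ∧ t z = b.getD p 0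

lemma AsnMatch.mono {S S' : Set ℕ} {a b : List ℕ} {s t : ℕ → ℕ} (h : AsnMatch S' a b s t)
    (hS : S ⊆ S') : AsnMatch S a b s t :=
  fun z hz => h z (hS hz)

lemma AsnMatch.symm {S : Set ℕ} {a b : List ℕ} {s t : ℕ → ℕ} (h : AsnMatch S a b s t)
    (hab : a.length = b.length) : AsnMatch S b a t s :=
  fun z hz => by
    obtain ⟨p, hp, hs, ht⟩ := h z hz
    exact ⟨p, hab ▸ hp, ht, hs⟩

lemma AsnMatch.append {S : Set ℕ} {a b c d l : List ℕ} {s t : ℕ → ℕ}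
    (h : AsnMatch (S \ {z | z ∈ l}) a b s t) (hab : a.length = b.length)
    (hc : l.length ≤ c.length) (hd : l.length ≤ d.length) :
    AsnMatch S (a ++ c) (b ++ d) (updateList s l c) (updateList t l d) := by
  intro z hz
  by_cases hzl : z ∈ l
  · obtain ⟨k, hk, hupd⟩ := exists_updateList_eq_getD hzl
    refine ⟨a.length + k, by simp only [List.length_append]; omega, ?_, ?_⟩
    · rw [hupd s c hc, List.getD_append_right _ _ _ _ (by omega), Nat.add_sub_cancel_left]
    · rw [hupd t d hd, List.getD_append_right _ _ _ _ (by omega), hab, Nat.add_sub_cancel_left]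
  · obtain ⟨p, hp, hs, ht⟩ := h z ⟨hz, hzl⟩
    refine ⟨p, by simp only [List.length_append]; omega, ?_, ?_⟩
    · rw [updateList_of_not_mem hzl, List.getD_append _ _ _ _ hp, hs]
    · rw [updateList_of_not_mem hzl, List.getD_append _ _ _ _ (by omega), ht]

lemma QFree.sat_iff_of_atomEquiv {A B : Str ar} {a b : List ℕ} (hAB : atomEquiv A a B b)
    {φ : IForm ar} (hq : QFree φ) {s t : ℕ → ℕ} (hsym : SymbolsBelow φ a.length)
    (hmatch : AsnMatch (freeVars φ) a b s t) : Sat A s φ ↔ Sat B t φ := by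
  induction hq with
  | @atom i v =>
    choose p hp hs ht using fun j => hmatch (v j) ⟨j, rfl⟩
    show A i (fun j => s (v j)) ↔ B i fun j => t (v j)
    simp only [hs, ht]
    exact hAB.2.2 i (hsym i (.atom v)) p hp
  | @eq x y =>
    obtain ⟨p, hp, hsx, htx⟩ := hmatch x (by simp [freeVars])
    obtain ⟨q, hq, hsy, hty⟩ := hmatch y (by simp [freeVars])
    show s x = s y ↔ t x = t y
    rw [hsx, hsy, htx, hty]
    exact hAB.2.1 p q hp hq
  | not _ ih => exact not_congr (ih (fun i h => hsym i (.not h)) hmatch)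
  | @and φ ψ _ _ ih₁ ih₂ =>
    rw [sat_and, sat_and]
    refine and_congr (ih₁ (fun i h => hsym i (.conj 0 (by simpa using h))) ?_)
      (ih₂ (fun i h => hsym i (.conj 1 (by simpa using h))) ?_)
    · exact hmatch.mono fun z hz => Set.mem_iUnion.2 ⟨0, by simpa using hz⟩
    · exact hmatch.mono fun z hz => Set.mem_iUnion.2 ⟨1, by simpa using hz⟩

lemma QFree.sat_iff_of_bfLe {β : Ordinal} {A B : Str ar} {a b : List ℕ}
    (hAB : BFLe β A a B b) {φ : IForm ar} (hq : QFree φ) {s t : ℕ → ℕ}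
    (hsym : β = 0 → SymbolsBelow φ a.length) (hmatch : AsnMatch (freeVars φ) a b s t) :
    Sat A s φ ↔ Sat B t φ := by
  rcases eq_or_ne β 0 with rfl | hβ
  · exact hq.sat_iff_of_atomEquiv (bfLe_zero_iff.1 hAB) (hsym rfl) hmatch
  · obtain ⟨m, hm⟩ := hq.exists_symbolsBelow
    obtain ⟨c, hc, hBA⟩ := (bfLe_iff_of_ne_zero hβ).1 hAB (List.replicate m 0) 0
      (pos_iff_ne_zero.2 hβ)
    refine (hq.sat_iff_of_atomEquiv (bfLe_zero_iff.1 hBA) (hm.mono (by simp)) ?_).symm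
    have hab := hAB.length_eq
    intro z hz
    obtain ⟨p, hp, hs, ht⟩ := hmatch z hz
    refine ⟨p, by simp only [List.length_append, List.length_replicate]; omega, ?_, ?_⟩
    · rw [List.getD_append _ _ _ _ (by omega), ht]
    · rw [List.getD_append _ _ _ _ hp, hs]

variable (ar) in
def PiPreserved (β : Ordinal) : Prop :=
  ∀ φ : IForm ar, IsPi β φ → ∀ (A B : Str ar) (a b : List ℕ) (s t : ℕ → ℕ), BFLe β A a B b →
    (β = 0 → SymbolsBelow φ a.length) → AsnMatch (freeVars φ) a b s t → Sat A s φ → Sat B t φ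

variable (ar) in
def SigReflected (β : Ordinal) : Prop :=
  ∀ φ : IForm ar, IsSig β φ → ∀ (A B : Str ar) (a b : List ℕ) (s t : ℕ → ℕ), BFLe β A a B b →
    (β = 0 → SymbolsBelow φ a.length) → AsnMatch (freeVars φ) a b s t → Sat B t φ → Sat A s φ

/-- One back-and-forth step across a block `l` of quantifiers of a formula `ψ` of level `γ < β`:
the witnesses `w` chosen in `B` (padded for the symbols of `ψ` if `γ = 0`) are answered by `c`
in `A`. -/
lemma BFLe.exists_step {β γ : Ordinal} (hγ : γ < β) {A B : Str ar} {a b : List ℕ}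
    (hAB : BFLe β A a B b) {ψ : IForm ar} (hψ : γ = 0 → QFree ψ) {l w : List ℕ}
    (hlw : l.length ≤ w.length) {s t : ℕ → ℕ}
    (hmatch : AsnMatch (freeVars ψ \ {z | z ∈ l}) a b s t) :
    ∃ c d : List ℕ, l.length ≤ c.length ∧ updateList t l d = updateList t l w ∧
      BFLe γ B (b ++ d) A (a ++ c) ∧ (γ = 0 → SymbolsBelow ψ (b ++ d).length) ∧
      AsnMatch (freeVars ψ) (b ++ d) (a ++ c) (updateList t l d) (updateList s l c) := by
  obtain ⟨m, hm⟩ := exists_symbolsBelow_of_eq_zero hψ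
  have hβ : β ≠ 0 := (pos_of_gt hγ).ne'
  obtain ⟨c, hc, hBA⟩ := (bfLe_iff_of_ne_zero hβ).1 hAB (w ++ List.replicate m 0) γ hγ
  have hab := hAB.length_eq
  simp only [List.length_append, List.length_replicate] at hc
  refine ⟨c, w ++ List.replicate m 0, by omega, updateList_append_of_le hlw _ _, hBA,
    fun h₀ => (hm h₀).mono ?_, (hmatch.symm hab).append hab.symm ?_ (by omega)⟩ <;>
  simp only [List.length_append, List.length_replicate] <;> omega

lemma piPreserved_of_lt {β : Ordinal} (IH : ∀ γ < β, SigReflected ar γ) : PiPreserved ar β := by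
  intro φ hφ A B a b s t hAB hsym hmatch hA
  cases hφ with
  | qf hq => exact (hq.sat_iff_of_bfLe hAB hsym hmatch).1 hA
  | comp γ l ψ hγ hψ =>
    intro n
    refine (sat_alls _ _).2 fun w hw => ?_
    have hmatch' : AsnMatch (freeVars (ψ n) \ {z | z ∈ l n}) a b s t :=
      hmatch.mono ((freeVars_alls (l n) (ψ n)).symm.subset.trans
        (Set.subset_iUnion (fun k => freeVars (IForm.alls (l k) (ψ k))) n))
    obtain ⟨c, d, hc, hd, hBA, hsym', hmatch''⟩ :=
      hAB.exists_step (hγ n) (fun h => (h ▸ hψ n).qFree_of_zero) hw hmatch'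
    rw [← hd]
    exact IH _ (hγ n) _ (hψ n) _ _ _ _ _ _ hBA hsym' hmatch'' ((sat_alls _ _).1 (hA n) c hc)

lemma sigReflected_of_lt {β : Ordinal} (IH : ∀ γ < β, PiPreserved ar γ) :
    SigReflected ar β := by
  intro φ hφ A B a b s t hAB hsym hmatch hB
  cases hφ with
  | qf hq => exact (hq.sat_iff_of_bfLe hAB hsym hmatch).2 hB
  | comp γ l ψ hγ hψ =>
    obtain ⟨n, hn⟩ := sat_disj.1 hB
    obtain ⟨w, hw, hBw⟩ := (sat_exs _ _).1 hn
    have hmatch' : AsnMatch (freeVars (ψ n) \ {z | z ∈ l n}) a b s t :=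
      hmatch.mono ((freeVars_exs (l n) (ψ n)).symm.subset.trans
        (Set.subset_iUnion (fun k => freeVars (IForm.exs (l k) (ψ k))) n))
    obtain ⟨c, d, hc, hd, hBA, hsym', hmatch''⟩ :=
      hAB.exists_step (hγ n) (fun h => (h ▸ hψ n).qFree_of_zero) hw hmatch'
    rw [← hd] at hBw
    exact sat_disj.2 ⟨n, (sat_exs _ _).2
      ⟨c, hc, IH _ (hγ n) _ (hψ n) _ _ _ _ _ _ hBA hsym' hmatch'' hBw⟩⟩

theorem piPreserved (β : Ordinal) : PiPreserved ar β := by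
  suffices ∀ β, PiPreserved ar β ∧ SigReflected ar β from (this β).1
  intro β
  induction β using WellFoundedLT.induction with
  | _ β IH => exact ⟨piPreserved_of_lt fun γ hγ => (IH γ hγ).2,
      sigReflected_of_lt fun γ hγ => (IH γ hγ).1⟩

namespace ModelsTAlpha

variable {T : IForm ar} {α : Ordinal} {M : ExtModel ar}

lemma length_eq (hM : ModelsTAlpha T α M) {β : Ordinal} (hβ : β ≤ α) {C : Str ar}
    {c b : List ℕ} (hC : SatS C T) (h : M.Phi β C c b) : b.length = c.length :=
  ((hM.2.2.2.1 β hβ C c hC b).1 h).1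

lemma atomEquiv_of_phi_zero (hM : ModelsTAlpha T α M) {C : Str ar} {c b : List ℕ}
    (hC : SatS C T) (h : M.Phi 0 C c b) : atomEquiv C c M.base b :=
  ((hM.2.2.2.1 0 zero_le C c hC b).1 h).2.1 rfl

lemma extMem_of_phi (hM : ModelsTAlpha T α M) {β γ : Ordinal} (hβ : β ≤ α) (hγ : γ < β)
    {C D : Str ar} {c b d y : List ℕ} (hC : SatS C T) (h : M.Phi β C c b) (hD : SatS D T)
    (hd : d.length = b.length + y.length) (h' : M.Phi γ D d (b ++ y)) : ExtMem γ D d C c :=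
  by_contra fun hne => ((hM.2.2.2.1 β hβ C c hC b).1 h).2.2 γ hγ D d hD hne y hd h'

lemma phi_of_phi_top (hM : ModelsTAlpha T α M) {β : Ordinal} (hβ : β < α) {C : Str ar}
    {c b : List ℕ} (hC : SatS C T) (h : M.Phi α C c b) :
    M.Phi β C c b ∧ ∀ γ < β, ∀ (D : Str ar) (d : List ℕ), SatS D T → ExtMem γ D d C c →
      ∃ y : List ℕ, d.length = b.length + y.length ∧ M.Phi γ D d (b ++ y) :=
  hM.2.2.2.2 β hβ C c b hC
    ⟨C, c, hC, (hM.length_eq le_rfl hC h).symm, bfEq_refl β C c, h⟩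

theorem bfLe_of_phi (hM : ModelsTAlpha T α M) (β : Ordinal) :
    (β ≤ α → ∀ (C : Str ar) (c b : List ℕ), SatS C T → M.Phi β C c b →
      BFLe β C c M.base b) ∧
    (β < α → ∀ (C : Str ar) (c b : List ℕ), SatS C T → M.Phi α C c b →
      BFLe β M.base b C c) := by
  induction β using WellFoundedLT.induction with
  | _ β IH =>
    refine ⟨fun hβ C c b hC h => ?_, fun hβ C c b hC h => ?_⟩
    · rcases eq_or_ne β 0 with rfl | hβ₀
      · exact bfLe_zero_iff.2 (hM.atomEquiv_of_phi_zero hC h)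
      refine (bfLe_iff_of_ne_zero hβ₀).2 fun d γ hγ => ?_
      obtain ⟨D, e, hD, he, hDe⟩ := hM.2.1 (b ++ d)
      have hγα := hγ.trans_le hβ
      obtain ⟨y, hy, hDC⟩ := hM.extMem_of_phi hβ hγ hC h hD (by simpa using he)
        (hM.phi_of_phi_top hγα hD hDe).1
      have := hM.length_eq hβ hC h
      simp only [List.length_append] at he hy
      exact ⟨y, by omega, ((IH γ hγ).2 hγα D e (b ++ d) hD hDe).trans hDC⟩
    · obtain ⟨hCβ, hExt⟩ := hM.phi_of_phi_top hβ hC h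
      rcases eq_or_ne β 0 with rfl | hβ₀
      · exact bfLe_zero_iff.2 (hM.atomEquiv_of_phi_zero hC hCβ).symm
      refine (bfLe_iff_of_ne_zero hβ₀).2 fun d γ hγ => ?_
      obtain ⟨y, hy, hCy⟩ := hExt γ hγ C (c ++ d) hC ⟨d, by simp, bfLe_refl γ C (c ++ d)⟩
      have := hM.length_eq le_rfl hC h
      simp only [List.length_append] at hy
      exact ⟨y, by omega, (IH γ hγ).1 (hγ.trans hβ).le C (c ++ d) (b ++ y) hC hCy⟩

end ModelsTAlpha

end

/-- If `T` is `Π^in_α`-axiomatizable, every model of `T_α` is a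
model of `T`. -/
theorem Talpha_implies_T {ar : ℕ → ℕ} (T : IForm ar) (α : Ordinal)
    (hsent : SentenceF T) (hPi : IsPi α T)
    (M : ExtModel ar) (hM : ModelsTAlpha T α M) : SatS M.base T := by
  obtain ⟨m, hm⟩ := exists_symbolsBelow_of_eq_zero fun h : α = 0 => (h ▸ hPi).qFree_of_zero
  obtain ⟨C, c, hC, hc, hCM⟩ := hM.2.1 (List.replicate m 0)
  have hle : BFLe α C c M.base (List.replicate m 0) := (hM.bfLe_of_phi α).1 le_rfl C c _ hC hCM
  have hmatch : AsnMatch (freeVars T) c (List.replicate m 0) (fun _ => 0) (fun _ => 0) := by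
    rw [hsent]; exact fun z hz => hz.elim
  exact piPreserved α T hPi C M.base c _ _ _ hle (fun h => by simpa [hc] using hm h) hmatch hC
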